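/- arXiv:2305.15796 — 6 statements merged into one kernel-verified Lean document; each statement's English description precedes it below -/
import Mathlib

section
/- Let p q : ℕ, let λ : Fin p → ℝ and α ω : Fin q → ℝ satisfy λ j ≠ 0 for all j and α k ≠ 0 for all k, let κ : ℝ, and let K⁺ K⁻ : Fin p → ℝ and L : Fin q → ℝ be arbitrary coefficients. Define V : (Fin p → ℝ) → (Fin q → ℂ) → ℝ by V u z = ∑_j (if u j > 0 then K⁺ j else K⁻ j) * |u j| ^ (κ / λ j) + ∑_k (L k) * ‖z k‖ ^ (κ / α k), where ^ denotes the real power (rpow). Then for every t : ℝ, every u : Fin p → ℝ and every z : Fin q → ℂ, V (fun j => Real.exp (λ j * t) * u j) (fun k => Complex.exp ((α k + ω k * Complex.I) * t) * z k) = Real.exp (κ * t) * V u z. (Thus every graph v = V(u,z) is invariant under the linear flow with real modes of rates λ j, complex modes of rates α k + i ω k, and enslaved rate κ.) -/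
/-! The flow multiplies `|u j|` by `exp (λ j t)` without changing the sign of `u j`, and `‖z k‖`
by `exp (α k t)`, the rotation `ω k` dropping out of the modulus. Raised to the power `κ / λ j`,
resp. `κ / α k`, either factor becomes `exp (κ t)`. -/

theorem exp_mul_rpow_div {r a : ℝ} (hr : r ≠ 0) (ha : 0 ≤ a) (κ t : ℝ) :
    (Real.exp (r * t) * a) ^ (κ / r) = Real.exp (κ * t) * a ^ (κ / r) := by
  rw [Real.mul_rpow (Real.exp_pos _).le ha, ← Real.exp_mul, mul_comm r t, mul_assoc,
    mul_div_cancel₀ _ hr, mul_comm t]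

theorem Complex.norm_exp_add_mul_I_mul (a w t : ℝ) (z : ℂ) :
    ‖Complex.exp ((a + w * Complex.I) * t) * z‖ = Real.exp (a * t) * ‖z‖ := by
  rw [norm_mul, Complex.norm_exp]
  congr 2
  simp [add_mul, Complex.mul_re]

/-- Invariance of the piecewise fractional-power graphs `v = V(u,z)` under the
linear flow with real modes of rates `λ j`, complex modes of rates `α k + i ω k`,
and enslaved rate `κ`. -/
theorem stmt_0 (p q : ℕ) (lam : Fin p → ℝ) (alp om : Fin q → ℝ)
    (hlam : ∀ j, lam j ≠ 0) (halp : ∀ k, alp k ≠ 0) (κ : ℝ)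
    (Kp Km : Fin p → ℝ) (L : Fin q → ℝ)
    (V : (Fin p → ℝ) → (Fin q → ℂ) → ℝ)
    (hV : ∀ (u : Fin p → ℝ) (z : Fin q → ℂ),
      V u z = (∑ j, (if u j > 0 then Kp j else Km j) * |u j| ^ (κ / lam j))
        + ∑ k, L k * ‖z k‖ ^ (κ / alp k)) :
    ∀ (t : ℝ) (u : Fin p → ℝ) (z : Fin q → ℂ),
      V (fun j => Real.exp (lam j * t) * u j)
        (fun k => Complex.exp ((↑(alp k) + ↑(om k) * Complex.I) * ↑t) * z k)
        = Real.exp (κ * t) * V u z := by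
  intro t u z
  rw [hV, hV, mul_add, Finset.mul_sum, Finset.mul_sum]
  congr 1 <;> refine Finset.sum_congr rfl fun i _ => ?_
  · simp only [gt_iff_lt, mul_pos_iff_of_pos_left (Real.exp_pos _)]
    rw [abs_mul, abs_of_pos (Real.exp_pos _), exp_mul_rpow_div (hlam i) (abs_nonneg _)]
    ring
  · rw [Complex.norm_exp_add_mul_I_mul, exp_mul_rpow_div (halp i) (norm_nonneg _)]
    ring
end

section
/- Let α ω β ν : ℝ with α ≠ 0 and let Q : ℂ. Define E : ℂ → ℂ for z ≠ 0 by E z = Q * (‖z‖ ^ (β / α) : ℝ) * Complex.exp (Complex.I * (ν / α) * Real.log ‖z‖). Then for every t : ℝ and every z : ℂ with z ≠ 0, E (Complex.exp ((α + ω * Complex.I) * t) * z) = Complex.exp ((β + ν * Complex.I) * t) * E z. -/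
/-!
For `x > 0` the factor `x ^ p * exp (i q log x)` is the complex power `x ^ (p + i q)`, so
`E z = Q * ‖z‖ ^ ((β + iν) / α)`. The flow multiplies `‖z‖` by `e^{αt}`, and
`(e^{αt}) ^ ((β + iν) / α) = e^{(β + iν) t}`.
-/

open Complex

theorem Complex.ofReal_rpow_mul_exp_log_eq_cpow {x : ℝ} (hx : 0 < x) (p q : ℝ) :
    ((x ^ p : ℝ) : ℂ) * exp (I * q * Real.log x) = (x : ℂ) ^ ((p : ℂ) + q * I) := by
  have hx₀ : (x : ℂ) ≠ 0 := ofReal_ne_zero.mpr hx.ne'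
  rw [ofReal_cpow hx.le, cpow_def_of_ne_zero hx₀, cpow_def_of_ne_zero hx₀, ← exp_add,
    ← ofReal_log hx.le]
  ring_nf

theorem Complex.ofReal_exp_cpow (a : ℝ) (s : ℂ) : (Real.exp a : ℂ) ^ s = exp (a * s) := by
  rw [cpow_def_of_ne_zero (ofReal_ne_zero.mpr (Real.exp_pos a).ne'),
    ← ofReal_log (Real.exp_pos a).le, Real.log_exp]

theorem Complex.norm_exp_add_mul_I_mul_ofReal (α ω t : ℝ) :
    ‖exp (((α : ℂ) + ω * I) * t)‖ = Real.exp (α * t) := by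
  simp [norm_exp, mul_re]

/-- The fractional graph `ℰ(z) = Q |z|^{β/α} e^{i(ν/α) log|z|}` is equivariant under
the linear flows `z ↦ e^{(α+iω)t} z` and `w ↦ e^{(β+iν)t} w`. -/
theorem stmt_2 (α ω β ν : ℝ) (hα : α ≠ 0) (Q : ℂ)
    (E : ℂ → ℂ)
    (hE : ∀ z : ℂ, z ≠ 0 →
      E z = Q * ((‖z‖ ^ (β / α) : ℝ) : ℂ)
        * Complex.exp (Complex.I * ((ν / α : ℝ) : ℂ) * ((Real.log ‖z‖ : ℝ) : ℂ))) :
    ∀ (t : ℝ) (z : ℂ), z ≠ 0 →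
      E (Complex.exp (((α : ℂ) + (ω : ℂ) * Complex.I) * (t : ℂ)) * z)
        = Complex.exp (((β : ℂ) + (ν : ℂ) * Complex.I) * (t : ℂ)) * E z := by
  have hE_cpow (z : ℂ) (hz : z ≠ 0) : E z = Q * (‖z‖ : ℂ) ^ (((β : ℂ) + ν * I) / α) := by
    rw [hE z hz, mul_assoc, ofReal_rpow_mul_exp_log_eq_cpow (norm_pos_iff.mpr hz)]
    push_cast
    ring_nf
  intro t z hz
  have hexponent : (α : ℂ) * t * (((β : ℂ) + ν * I) / α) = ((β : ℂ) + ν * I) * t := by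
    field_simp [ofReal_ne_zero.mpr hα]
  rw [hE_cpow _ (mul_ne_zero (exp_ne_zero _) hz), hE_cpow z hz, norm_mul,
    norm_exp_add_mul_I_mul_ofReal, ofReal_mul,
    mul_cpow_ofReal_nonneg (Real.exp_pos _).le (norm_nonneg z), ofReal_exp_cpow, ofReal_mul,
    hexponent]
  ring
end

section
/- Let γ : ℂ, k₁ k₂ : ℕ, and p q : ℝ. Define the generalized monomial M : ℂ → ℂ for ξ ≠ 0 by M ξ = ξ ^ k₁ * (starRingEnd ℂ ξ) ^ k₂ * (‖ξ‖ ^ p : ℝ) * Complex.exp (Complex.I * q * Real.log ‖ξ‖). Then for every t : ℝ and every ξ : ℂ with ξ ≠ 0, M (Complex.exp (γ * t) * ξ) = Complex.exp ((k₁ * γ + k₂ * (starRingEnd ℂ γ) + (p + q * Complex.I) * γ.re) * t) * M ξ. In particular, every generalized monomial ξ^{k₁} ξ̄^{k₂} |ξ|^{p} e^{i q log|ξ|} is an eigenfunction of the linear flow ξ ↦ e^{γ t} ξ with eigenvalue k₁γ + k₂γ̄ + (p + iq) Re γ. -/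
/-! Under `ξ ↦ e^z ξ` each factor of the monomial picks up an exponential factor:
`ξ ^ k₁` gains `e^{k₁ z}`, `conj ξ ^ k₂` gains `e^{k₂ z̄}`, and since `‖e^z ξ‖ = e^{Re z} ‖ξ‖`,
`‖ξ‖ ^ p` gains `e^{p Re z}` and `log ‖ξ‖` is shifted by `Re z`. Setting `z = γ t` gives the
eigenvalue. -/

open Complex ComplexConjugate

noncomputable def fracMonomial (k₁ k₂ : ℕ) (p q : ℝ) (ξ : ℂ) : ℂ :=
  ξ ^ k₁ * conj ξ ^ k₂ * ((‖ξ‖ ^ p : ℝ) : ℂ) * exp (I * q * (Real.log ‖ξ‖ : ℝ))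

lemma norm_exp_mul (z ξ : ℂ) : ‖exp z * ξ‖ = Real.exp z.re * ‖ξ‖ := by
  rw [norm_mul, norm_exp]

lemma rpow_norm_exp_mul (z ξ : ℂ) (p : ℝ) :
    ‖exp z * ξ‖ ^ p = Real.exp (z.re * p) * ‖ξ‖ ^ p := by
  rw [norm_exp_mul, Real.mul_rpow (Real.exp_pos _).le (norm_nonneg _), ← Real.exp_mul]

lemma log_norm_exp_mul (z : ℂ) {ξ : ℂ} (hξ : ξ ≠ 0) :
    Real.log ‖exp z * ξ‖ = z.re + Real.log ‖ξ‖ := by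
  rw [norm_exp_mul, Real.log_mul (Real.exp_ne_zero _) (norm_ne_zero_iff.mpr hξ), Real.log_exp]

lemma fracMonomial_exp_mul (k₁ k₂ : ℕ) (p q : ℝ) (z : ℂ) {ξ : ℂ} (hξ : ξ ≠ 0) :
    fracMonomial k₁ k₂ p q (exp z * ξ)
      = exp (k₁ * z + k₂ * conj z + (p + q * I) * z.re) * fracMonomial k₁ k₂ p q ξ := by
  simp only [fracMonomial, rpow_norm_exp_mul, log_norm_exp_mul z hξ, map_mul, ← exp_conj,
    mul_pow, ← exp_nat_mul, ofReal_mul, ofReal_exp, ofReal_add]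
  rw [show I * q * (z.re + Real.log ‖ξ‖) = I * q * z.re + I * q * Real.log ‖ξ‖ by ring,
    show (k₁ * z + k₂ * conj z + (p + q * I) * z.re : ℂ)
      = k₁ * z + k₂ * conj z + z.re * p + I * q * z.re by ring]
  simp only [exp_add]
  ring

/-- Every generalized monomial `ξ^{k₁} ξ̄^{k₂} |ξ|^{p} e^{i q log|ξ|}` is an
eigenfunction of the linear flow `ξ ↦ e^{γt} ξ` with eigenvalue
`k₁γ + k₂γ̄ + (p + iq) Re γ`. -/
theorem stmt_3 (γ : ℂ) (k₁ k₂ : ℕ) (p q : ℝ) (M : ℂ → ℂ)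
    (hM : ∀ ξ : ℂ, ξ ≠ 0 →
      M ξ = ξ ^ k₁ * (starRingEnd ℂ ξ) ^ k₂ * ((‖ξ‖ ^ p : ℝ) : ℂ)
        * Complex.exp (Complex.I * (q : ℂ) * ((Real.log ‖ξ‖ : ℝ) : ℂ))) :
    ∀ (t : ℝ) (ξ : ℂ), ξ ≠ 0 →
      M (Complex.exp (γ * (t : ℂ)) * ξ)
        = Complex.exp (((k₁ : ℂ) * γ + (k₂ : ℂ) * (starRingEnd ℂ γ)
            + ((p : ℂ) + (q : ℂ) * Complex.I) * (γ.re : ℂ)) * (t : ℂ)) * M ξ := by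
  intro t ξ hξ
  have hM' : ∀ ξ : ℂ, ξ ≠ 0 → M ξ = fracMonomial k₁ k₂ p q ξ := hM
  rw [hM' _ (mul_ne_zero (exp_ne_zero _) hξ), hM' ξ hξ, fracMonomial_exp_mul k₁ k₂ p q _ hξ]
  congr 2
  simp only [map_mul, conj_ofReal, re_mul_ofReal, ofReal_mul]
  ring
end

section
/- Let p q : ℕ, let λ : Fin p → ℝ satisfy |λ j| ≠ 0 and |λ j| ≠ 1 for all j, let μ : Fin q → ℂ satisfy ‖μ k‖ ≠ 0 and ‖μ k‖ ≠ 1 for all k, let κ : ℝ with κ > 0, and let K : Fin p → ℝ, L : Fin q → ℝ. Define F : (Fin p → ℝ) → (Fin q → ℂ) → ℝ by F u z = ∑_j (K j) * |u j| ^ (Real.log κ / Real.log |λ j|) + ∑_k (L k) * ‖z k‖ ^ (Real.log κ / Real.log ‖μ k‖) (real powers, Real.rpow). Then for every u : Fin p → ℝ and z : Fin q → ℂ, F (fun j => λ j * u j) (fun k => μ k * z k) = κ * F u z. -/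
lemma key_rpow (a b κ : ℝ) (ha : 0 < a) (ha1 : a ≠ 1) (hκ : 0 < κ) (hb : 0 ≤ b) :
    (a * b) ^ (Real.log κ / Real.log a) = κ * b ^ (Real.log κ / Real.log a) := by
  have hla : Real.log a ≠ 0 := Real.log_ne_zero_of_pos_of_ne_one ha ha1
  rw [Real.mul_rpow ha.le hb]
  congr 1
  rw [Real.rpow_def_of_pos ha, mul_div_assoc', mul_comm, mul_div_assoc, div_self hla,
    mul_one, Real.exp_log hκ]

/-- Discrete-time invariance of the fractional-power graphs: the functions
`F(u,z) = ∑ⱼ Kⱼ |uⱼ|^{log κ / log|λⱼ|} + ∑ₖ Lₖ ‖zₖ‖^{log κ / log‖μₖ‖}` solve the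
invariance functional equation `F(λ·u, μ·z) = κ F(u,z)` of the linearized mapping. -/
theorem stmt_14 (p q : ℕ) (lam : Fin p → ℝ)
    (hlam : ∀ j, |lam j| ≠ 0 ∧ |lam j| ≠ 1)
    (μ : Fin q → ℂ) (hμ : ∀ k, ‖μ k‖ ≠ 0 ∧ ‖μ k‖ ≠ 1)
    (κ : ℝ) (hκ : 0 < κ) (K : Fin p → ℝ) (L : Fin q → ℝ)
    (F : (Fin p → ℝ) → (Fin q → ℂ) → ℝ)
    (hF : ∀ (u : Fin p → ℝ) (z : Fin q → ℂ),
      F u z = (∑ j, K j * |u j| ^ (Real.log κ / Real.log |lam j|))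
        + ∑ k, L k * ‖z k‖ ^ (Real.log κ / Real.log ‖μ k‖)) :
    ∀ (u : Fin p → ℝ) (z : Fin q → ℂ),
      F (fun j => lam j * u j) (fun k => μ k * z k) = κ * F u z := by
  intro u z
  rw [hF, hF, mul_add, Finset.mul_sum, Finset.mul_sum]
  congr 1
  · apply Finset.sum_congr rfl
    intro j _
    have h := key_rpow |lam j| |u j| κ ((hlam j).1.lt_of_le' (abs_nonneg _)) (hlam j).2 hκ
      (abs_nonneg _)
    rw [abs_mul, h, mul_left_comm]
  · apply Finset.sum_congr rfl
    intro k _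
    have h := key_rpow ‖μ k‖ ‖z k‖ κ ((hμ k).1.lt_of_le' (norm_nonneg _)) (hμ k).2 hκ
      (norm_nonneg _)
    rw [norm_mul, h, mul_left_comm]
end

section
/- Let p q : ℕ with 0 < p + q, let λ : Fin p → ℝ satisfy |λ j| ≠ 0 and |λ j| ≠ 1 for all j, let μ : Fin q → ℂ satisfy ‖μ k‖ ≠ 0 and ‖μ k‖ ≠ 1 for all k, let β ν : ℝ with β ≠ 0, set ρ = Real.sqrt (β^2 + ν^2) and θ = Real.arctan (ν / β), and let O : Fin p → ℂ, Q : Fin q → ℂ. Define E : (Fin p → ℝ) → (Fin q → ℂ) → ℂ for u, z with all u j ≠ 0 and all z k ≠ 0 by E u z = (∑_j (O j) * |u j| ^ (Real.log ρ / Real.log |λ j|) + ∑_k (Q k) * ‖z k‖ ^ (Real.log ρ / Real.log ‖μ k‖)) * Complex.exp (Complex.I * (θ / (p + q)) * (∑_j Real.log |u j| / Real.log |λ j| + ∑_k Real.log ‖z k‖ / Real.log ‖μ k‖)). Then for all such u, z: E (fun j => λ j * u j) (fun k => μ k * z k) = ρ * Complex.exp (Complex.I * θ) * E u z. -/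
lemma log_ne_zero_aux {x : ℝ} (h0 : |x| ≠ 0) (h1 : |x| ≠ 1) :
    Real.log |x| ≠ 0 := by
  intro h
  rcases Real.log_eq_zero.mp h with h' | h' | h'
  · exact h0 h'
  · exact h1 h'
  · have := abs_nonneg x; linarith [h' ▸ this]

lemma rpow_log_div_log {x ρ : ℝ} (hρ : 0 < ρ) (h0 : (0:ℝ) < x) (hlog : Real.log x ≠ 0) :
    x ^ (Real.log ρ / Real.log x) = ρ := by
  rw [Real.rpow_def_of_pos h0]
  rw [show Real.log x * (Real.log ρ / Real.log x) = Real.log ρ by field_simp]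
  exact Real.exp_log hρ

/-- Discrete-time complex-enslaved-mode invariance: the fractional-power functions
`ℰ(u,z)` with enslaved complex eigenvalue `β + iν` of modulus `ρ = √(β²+ν²)` and
argument `θ = arctan(ν/β)` satisfy `ℰ(λ·u, μ·z) = ρ e^{iθ} ℰ(u,z)`. -/
theorem stmt_15 (p q : ℕ) (hpq : 0 < p + q)
    (lam : Fin p → ℝ) (hlam : ∀ j, |lam j| ≠ 0 ∧ |lam j| ≠ 1)
    (μ : Fin q → ℂ) (hμ : ∀ k, ‖μ k‖ ≠ 0 ∧ ‖μ k‖ ≠ 1)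
    (β ν : ℝ) (hβ : β ≠ 0)
    (ρ θ : ℝ) (hρ : ρ = Real.sqrt (β ^ 2 + ν ^ 2)) (hθ : θ = Real.arctan (ν / β))
    (O : Fin p → ℂ) (Q : Fin q → ℂ)
    (E : (Fin p → ℝ) → (Fin q → ℂ) → ℂ)
    (hE : ∀ (u : Fin p → ℝ) (z : Fin q → ℂ), (∀ j, u j ≠ 0) → (∀ k, z k ≠ 0) →
      E u z = ((∑ j, O j * ((|u j| ^ (Real.log ρ / Real.log |lam j|) : ℝ) : ℂ))
          + ∑ k, Q k * ((‖z k‖ ^ (Real.log ρ / Real.log ‖μ k‖) : ℝ) : ℂ))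
        * Complex.exp (Complex.I * ((θ / (p + q) : ℝ) : ℂ)
          * (((∑ j, Real.log |u j| / Real.log |lam j|)
              + ∑ k, Real.log ‖z k‖ / Real.log ‖μ k‖ : ℝ) : ℂ))) :
    ∀ (u : Fin p → ℝ) (z : Fin q → ℂ), (∀ j, u j ≠ 0) → (∀ k, z k ≠ 0) →
      E (fun j => lam j * u j) (fun k => μ k * z k)
        = (ρ : ℂ) * Complex.exp (Complex.I * (θ : ℂ)) * E u z := by
  intro u z hu hz
  have hρpos : (0:ℝ) < ρ := by
    rw [hρ]; exact Real.sqrt_pos.mpr (by positivity)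
  have hlam0 : ∀ j, lam j ≠ 0 := fun j => abs_ne_zero.mp (hlam j).1
  have hμ0 : ∀ k, μ k ≠ 0 := fun k => norm_ne_zero_iff.mp (hμ k).1
  have hu' : ∀ j, lam j * u j ≠ 0 := fun j => mul_ne_zero (hlam0 j) (hu j)
  have hz' : ∀ k, μ k * z k ≠ 0 := fun k => mul_ne_zero (hμ0 k) (hz k)
  rw [hE _ _ hu' hz', hE u z hu hz]
  have hlamlog : ∀ j, Real.log |lam j| ≠ 0 := fun j =>
    log_ne_zero_aux (hlam j).1 (hlam j).2
  have hμlog : ∀ k, Real.log ‖μ k‖ ≠ 0 := by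
    intro k
    have h1 : |‖μ k‖| = ‖μ k‖ := abs_of_nonneg (norm_nonneg _)
    have := log_ne_zero_aux (x := ‖μ k‖) (by rw [h1]; exact (hμ k).1)
      (by rw [h1]; exact (hμ k).2)
    rwa [h1] at this
  -- rpow identities
  have hA : ∀ j, (|lam j * u j| ^ (Real.log ρ / Real.log |lam j|) : ℝ)
      = ρ * |u j| ^ (Real.log ρ / Real.log |lam j|) := by
    intro j
    rw [abs_mul, Real.mul_rpow (abs_nonneg _) (abs_nonneg _),
      rpow_log_div_log hρpos (abs_pos.mpr (hlam0 j)) (hlamlog j)]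
  have hB : ∀ k, (‖μ k * z k‖ ^ (Real.log ρ / Real.log ‖μ k‖) : ℝ)
      = ρ * ‖z k‖ ^ (Real.log ρ / Real.log ‖μ k‖) := by
    intro k
    rw [norm_mul, Real.mul_rpow (norm_nonneg _) (norm_nonneg _),
      rpow_log_div_log hρpos (norm_pos_iff.mpr (hμ0 k)) (hμlog k)]
  -- log identities
  have hC : ∀ j, Real.log |lam j * u j| / Real.log |lam j|
      = 1 + Real.log |u j| / Real.log |lam j| := by
    intro j
    rw [abs_mul, Real.log_mul (fun h => hlam0 j (abs_eq_zero.mp h))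
      (fun h => hu j (abs_eq_zero.mp h)), add_div, div_self (hlamlog j)]
  have hD : ∀ k, Real.log ‖μ k * z k‖ / Real.log ‖μ k‖
      = 1 + Real.log ‖z k‖ / Real.log ‖μ k‖ := by
    intro k
    rw [norm_mul, Real.log_mul (fun h => hμ0 k (norm_eq_zero.mp h))
      (fun h => hz k (norm_eq_zero.mp h)), add_div, div_self (hμlog k)]
  simp only [hA, hB, hC, hD]
  -- sums with the factor ρ pulled out
  have hsum1 : (∑ j, O j * ((ρ * |u j| ^ (Real.log ρ / Real.log |lam j|) : ℝ) : ℂ))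
      = (ρ:ℂ) * ∑ j, O j * ((|u j| ^ (Real.log ρ / Real.log |lam j|) : ℝ) : ℂ) := by
    rw [Finset.mul_sum]; congr 1; funext j; push_cast; ring
  have hsum2 : (∑ k, Q k * ((ρ * ‖z k‖ ^ (Real.log ρ / Real.log ‖μ k‖) : ℝ) : ℂ))
      = (ρ:ℂ) * ∑ k, Q k * ((‖z k‖ ^ (Real.log ρ / Real.log ‖μ k‖) : ℝ) : ℂ) := by
    rw [Finset.mul_sum]; congr 1; funext k; push_cast; ring
  rw [hsum1, hsum2, ← mul_add]
  -- exponent identity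
  have hpq' : ((p:ℝ) + q) ≠ 0 := by exact_mod_cast hpq.ne'
  have hexp : ((∑ j, (1 + Real.log |u j| / Real.log |lam j|))
        + ∑ k, (1 + Real.log ‖z k‖ / Real.log ‖μ k‖) : ℝ)
      = ((p:ℝ) + q) + ((∑ j, Real.log |u j| / Real.log |lam j|)
        + ∑ k, Real.log ‖z k‖ / Real.log ‖μ k‖) := by
    rw [Finset.sum_add_distrib, Finset.sum_add_distrib]
    simp [Finset.sum_const]
    ring
  rw [hexp]
  have key : Complex.exp (Complex.I * ((θ / (p + q) : ℝ) : ℂ)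
        * ((((p:ℝ) + q) + ((∑ j, Real.log |u j| / Real.log |lam j|)
          + ∑ k, Real.log ‖z k‖ / Real.log ‖μ k‖) : ℝ) : ℂ))
      = Complex.exp (Complex.I * (θ:ℂ)) * Complex.exp (Complex.I * ((θ / (p + q) : ℝ) : ℂ)
        * (((∑ j, Real.log |u j| / Real.log |lam j|)
          + ∑ k, Real.log ‖z k‖ / Real.log ‖μ k‖ : ℝ) : ℂ)) := by
    rw [← Complex.exp_add]
    congr 1
    push_cast
    have hpq2 : ((p:ℂ) + (q:ℂ)) ≠ 0 := by exact_mod_cast hpq'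
    field_simp
  rw [key]
  ring
end

section
/- Let λ κ : ℝ with λ ≠ 0, κ / λ > 0, and κ / λ ∉ Set.range (Int.cast : ℤ → ℝ). Suppose F : ℝ → ℝ satisfies F (Real.exp (λ * t) * u) = Real.exp (κ * t) * F u for all t u : ℝ, and that F is (⌊κ/λ⌋ + 1)-times continuously differentiable on ℝ (ContDiff ℝ (⌊κ/λ⌋ + 1) F). Then F = 0. -/
/-!
Along the flow the invariance forces `F u = F(±1) · |u| ^ α` on each half-line, with
`α = κ/λ ∈ (n, n + 1)`, `n = ⌊κ/λ⌋`. The `(n + 1)`-st derivative of `|u| ^ α` is a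
nonzero multiple of `|u| ^ (α - n - 1)`, which blows up at the origin; continuity of the
`(n + 1)`-st derivative of `F` therefore forces `F(±1) = 0`, and `F 0 = 0` because `0` is
a fixed point of the scaling `v ↦ e^{κt} v`.
-/

open Real Filter Topology Set

lemma eq_zero_of_contDiff_of_eqOn_rpow {F : ℝ → ℝ} {c α : ℝ} {n : ℕ} (hn : n < α)
    (hα : α < n + 1) (hF : ContDiff ℝ ((n : ℕ∞) + 1) F)
    (hFpow : EqOn F (fun u => c * u ^ α) (Ioi 0)) : c = 0 := by
  by_contra hc
  set P := (descPochhammer ℝ (n + 1)).eval α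
  have hP : P ≠ 0 := (descPochhammer_pos (by push_cast; linarith)).ne'
  have hderiv : EqOn (iteratedDeriv (n + 1) F) (fun u => c * (P * u ^ (α - (n + 1 : ℕ))))
      (Ioi 0) := by
    intro u hu
    rw [hFpow.iteratedDeriv_of_isOpen isOpen_Ioi (n + 1) hu, iteratedDeriv_const_mul_field,
      iteratedDeriv_eq_iterate, iter_deriv_rpow_const]
  have hcont : Continuous (iteratedDeriv (n + 1) F) :=
    hF.continuous_iteratedDeriv (n + 1) (by exact_mod_cast le_rfl)
  have hbounded : Tendsto (fun u : ℝ => u ^ (α - (n + 1 : ℕ))) (𝓝[>] 0)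
      (𝓝 ((c * P)⁻¹ * iteratedDeriv (n + 1) F 0)) := by
    refine ((hcont.tendsto 0).mono_left nhdsWithin_le_nhds).const_mul _ |>.congr' ?_
    filter_upwards [self_mem_nhdsWithin] with u hu
    rw [hderiv hu]
    field_simp
  exact not_tendsto_atTop_of_tendsto_nhds hbounded
    (tendsto_rpow_neg_nhdsGT_zero (by push_cast; linarith))

lemma apply_mul_eq_rpow_mul_of_flow_invariant {lam κ : ℝ} (hlam : lam ≠ 0) {F : ℝ → ℝ}
    (hF : ∀ t u : ℝ, F (exp (lam * t) * u) = exp (κ * t) * F u) ⦃u : ℝ⦄ (hu : 0 < u)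
    (s : ℝ) :
    F (u * s) = u ^ (κ / lam) * F s := by
  have h := hF (log u / lam) s
  rwa [mul_div_cancel₀ _ hlam, exp_log hu, show κ * (log u / lam) = log u * (κ / lam) by ring,
    ← rpow_def_of_pos hu] at h

/-- Uniqueness in higher smoothness class: if `κ/λ` is positive and non-integer, then
the only invariant graph `v = F(u)` of the linear flow `u ↦ e^{λt}u`, `v ↦ e^{κt}v`
that is `⌊κ/λ⌋ + 1` times continuously differentiable is the zero graph. -/
theorem stmt_17 (lam κ : ℝ) (hlam : lam ≠ 0) (hpos : 0 < κ / lam)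
    (hnotint : κ / lam ∉ Set.range (Int.cast : ℤ → ℝ))
    (F : ℝ → ℝ)
    (hF : ∀ t u : ℝ, F (Real.exp (lam * t) * u) = Real.exp (κ * t) * F u)
    (hsmooth : ContDiff ℝ ((⌊κ / lam⌋₊ : ℕ∞) + 1) F) :
    F = 0 := by
  set α := κ / lam
  have hscale := apply_mul_eq_rpow_mul_of_flow_invariant hlam hF
  have hn : (⌊α⌋₊ : ℝ) < α := (Nat.floor_le hpos.le).lt_of_ne fun h =>
    hnotint ⟨⌊α⌋₊, by exact_mod_cast h⟩
  have hα : α < ⌊α⌋₊ + 1 := Nat.lt_floor_add_one α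
  have hF1 : F 1 = 0 := eq_zero_of_contDiff_of_eqOn_rpow hn hα hsmooth fun u hu => by
    simpa [mul_comm] using hscale hu 1
  have hFm1 : F (-1) = 0 :=
    eq_zero_of_contDiff_of_eqOn_rpow hn hα (hsmooth.comp contDiff_neg) fun u hu => by
      simpa [mul_comm] using hscale hu (-1)
  have hF0 : F 0 = 0 := by
    have h := hscale two_pos 0
    have h2 : (1 : ℝ) < 2 ^ α := one_lt_rpow one_lt_two hpos
    rw [mul_zero] at h
    have h' : (2 ^ α - 1) * F 0 = 0 := by linarith
    exact (mul_eq_zero.1 h').resolve_left (by linarith)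
  funext u
  rcases lt_trichotomy u 0 with hu | rfl | hu
  · simpa [hFm1] using hscale (neg_pos.2 hu) (-1)
  · exact hF0
  · simpa [hF1] using hscale hu 1
end
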